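/- arXiv:2603.20527 — 2 statements merged into one kernel-verified Lean document; each statement's English description precedes it below -/
import Mathlib

section
/- Let f : ℝ^{m×n} → ℝ be differentiable with L_F-Lipschitz gradient in Frobenius norm and bounded below by f*. Consider iterates W_{t+1} = W_t − η D_t for t = 1,…,T with η > 0, where each D_t satisfies ‖D_t‖_F = √m and ⟨∇f(W_t), D_t⟩ ≥ ‖∇f(W_t)‖_F − (√m+1)‖E_t‖_F for some matrices E_t. Then (1/T) Σ_{t=1}^T ‖∇f(W_t)‖_F ≤ (f(W_1) − f*)/(Tη) + (√m+1)·(1/T)Σ_{t=1}^T ‖E_t‖_F + L_F η m / 2. -/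
open Finset

theorem descent_lemma {F : Type*} [NormedAddCommGroup F] [InnerProductSpace ℝ F]
    [CompleteSpace F]
    (f : F → ℝ) (f' : F → F) (hf : ∀ x, HasGradientAt f (f' x) x)
    (LF : ℝ) (hLip : ∀ a b, ‖f' a - f' b‖ ≤ LF * ‖a - b‖) (x v : F) :
    f (x + v) ≤ f x + inner ℝ (f' x) v + LF / 2 * ‖v‖ ^ 2 := by
  set g : ℝ → ℝ := fun s =>
    f (x + s • v) - s * inner ℝ (f' x) v - LF * ‖v‖ ^ 2 / 2 * s ^ 2 with hg
  have hderiv : ∀ s : ℝ, HasDerivAt g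
      ((inner ℝ (f' (x + s • v)) v : ℝ) - inner ℝ (f' x) v - LF * ‖v‖ ^ 2 * s) s := by
    intro s
    have hline : HasDerivAt (fun s : ℝ => x + s • v) v s := by
      simpa using ((hasDerivAt_id s).smul_const v).const_add x
    have h1 : HasDerivAt (fun s : ℝ => f (x + s • v)) (inner ℝ (f' (x + s • v)) v : ℝ) s := by
      have := ((hasGradientAt_iff_hasFDerivAt.mp (hf (x + s • v))).comp_hasDerivAt s hline)
      exact this
    have h2 : HasDerivAt (fun s : ℝ => s * (inner ℝ (f' x) v : ℝ)) (inner ℝ (f' x) v : ℝ) s := by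
      simpa using (hasDerivAt_id s).mul_const (inner ℝ (f' x) v : ℝ)
    have h3 : HasDerivAt (fun s : ℝ => LF * ‖v‖ ^ 2 / 2 * s ^ 2) (LF * ‖v‖ ^ 2 * s) s := by
      have := (hasDerivAt_pow 2 s).const_mul (LF * ‖v‖ ^ 2 / 2)
      convert this using 1
      · rfl
      · rfl
      · norm_num
        ring
    exact (h1.sub h2).sub h3
  have hdiff : ∀ s : ℝ, DifferentiableAt ℝ g s := fun s => (hderiv s).differentiableAt
  have key : g 1 - g 0 ≤ 0 * (1 - 0) := by
    apply Convex.image_sub_le_mul_sub_of_deriv_le (convex_Icc (0:ℝ) 1)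
      (fun s _ => (hdiff s).continuousAt.continuousWithinAt)
      (fun s _ => (hdiff s).differentiableWithinAt)
    · intro s hs
      rw [interior_Icc] at hs
      rw [(hderiv s).deriv]
      have hcs : (inner ℝ (f' (x + s • v)) v : ℝ) - inner ℝ (f' x) v ≤ LF * ‖v‖ ^ 2 * s := by
        have h1 : (inner ℝ (f' (x + s • v)) v : ℝ) - inner ℝ (f' x) v
            = inner ℝ (f' (x + s • v) - f' x) v := by rw [inner_sub_left]
        rw [h1]
        calc (inner ℝ (f' (x + s • v) - f' x) v : ℝ)
            ≤ ‖f' (x + s • v) - f' x‖ * ‖v‖ := real_inner_le_norm _ _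
          _ ≤ (LF * ‖x + s • v - x‖) * ‖v‖ := by
              apply mul_le_mul_of_nonneg_right (hLip _ _) (norm_nonneg _)
          _ = LF * ‖v‖ ^ 2 * s := by
              rw [add_sub_cancel_left, norm_smul, Real.norm_eq_abs,
                abs_of_pos hs.1]
              ring
      linarith
    · exact Set.left_mem_Icc.mpr zero_le_one
    · exact Set.right_mem_Icc.mpr zero_le_one
    · exact zero_le_one
  have hg0 : g 0 = f x := by simp [hg]
  have hg1 : g 1 = f (x + v) - inner ℝ (f' x) v - LF * ‖v‖ ^ 2 / 2 := by simp [hg]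
  rw [hg0, hg1] at key
  linarith


theorem rmnp_convergence_core_frob {m n : ℕ}
    (f : EuclideanSpace ℝ (Fin m × Fin n) → ℝ)
    (f' : EuclideanSpace ℝ (Fin m × Fin n) → EuclideanSpace ℝ (Fin m × Fin n))
    (hf : ∀ x, HasGradientAt f (f' x) x)
    (LF : ℝ)
    (hLip : ∀ W W', ‖f' W - f' W'‖ ≤ LF * ‖W - W'‖)
    (fstar : ℝ) (hbdd : ∀ x, fstar ≤ f x)
    (T : ℕ) (hT : 1 ≤ T) (η : ℝ) (hη : 0 < η)
    (W D E : ℕ → EuclideanSpace ℝ (Fin m × Fin n))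
    (hstep : ∀ t ∈ Finset.Icc 1 T, W (t + 1) = W t - η • D t)
    (hD : ∀ t ∈ Finset.Icc 1 T, ‖D t‖ = Real.sqrt m)
    (hinner : ∀ t ∈ Finset.Icc 1 T,
      (inner ℝ (f' (W t)) (D t) : ℝ) ≥ ‖f' (W t)‖ - (Real.sqrt m + 1) * ‖E t‖) :
    (1 / (T : ℝ)) * ∑ t ∈ Finset.Icc 1 T, ‖f' (W t)‖ ≤
      (f (W 1) - fstar) / (T * η)
        + (Real.sqrt m + 1) * ((1 / (T : ℝ)) * ∑ t ∈ Finset.Icc 1 T, ‖E t‖)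
        + LF * η * m / 2 := by
  have hTpos : (0 : ℝ) < T := by exact_mod_cast Nat.lt_of_lt_of_le Nat.zero_lt_one hT
  -- per-step inequality
  have hstep' : ∀ t ∈ Finset.Icc 1 T,
      η * ‖f' (W t)‖ ≤ (f (W t) - f (W (t + 1)))
        + η * ((Real.sqrt m + 1) * ‖E t‖) + LF * η ^ 2 * m / 2 := by
    intro t ht
    have hdes := descent_lemma f f' hf LF hLip (W t) (-(η • D t))
    have hWt : W (t + 1) = W t + -(η • D t) := by rw [hstep t ht]; abel
    rw [← hWt] at hdes
    have hnorm : ‖-(η • D t)‖ ^ 2 = η ^ 2 * m := by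
      rw [norm_neg, norm_smul, Real.norm_eq_abs, abs_of_pos hη, hD t ht, mul_pow,
        Real.sq_sqrt (Nat.cast_nonneg m)]
    have hip : (inner ℝ (f' (W t)) (-(η • D t)) : ℝ) = -(η * inner ℝ (f' (W t)) (D t)) := by
      rw [inner_neg_right, real_inner_smul_right]
    rw [hnorm, hip] at hdes
    have hi := hinner t ht
    nlinarith [hi, hdes]
  -- sum it up
  have hsum : η * (∑ t ∈ Finset.Icc 1 T, ‖f' (W t)‖) ≤
      (f (W 1) - fstar) + η * ((Real.sqrt m + 1) * ∑ t ∈ Finset.Icc 1 T, ‖E t‖)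
        + T * (LF * η ^ 2 * m / 2) := by
    have h1 : ∑ t ∈ Finset.Icc 1 T, (η * ‖f' (W t)‖) ≤
        ∑ t ∈ Finset.Icc 1 T, ((f (W t) - f (W (t + 1)))
          + η * ((Real.sqrt m + 1) * ‖E t‖) + LF * η ^ 2 * m / 2) :=
      Finset.sum_le_sum hstep'
    have htel : ∑ t ∈ Finset.Icc 1 T, (f (W t) - f (W (t + 1))) = f (W 1) - f (W (T + 1)) := by
      rw [show Finset.Icc 1 T = Finset.Ico 1 (T+1) by rw [Finset.Ico_add_one_right_eq_Icc]]
      rw [Finset.sum_Ico_eq_sum_range]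
      simp only [Nat.add_sub_cancel]
      have := Finset.sum_range_sub' (fun i => f (W (1 + i))) T
      simpa [add_assoc, add_comm 1 T] using this
    rw [Finset.sum_add_distrib, Finset.sum_add_distrib, htel, ← Finset.mul_sum,
      Finset.sum_const, Nat.card_Icc, Nat.add_sub_cancel, nsmul_eq_mul] at h1
    have hlast : fstar ≤ f (W (T + 1)) := hbdd _
    have h2 : ∑ x ∈ Finset.Icc 1 T, η * ((Real.sqrt m + 1) * ‖E x‖)
        = η * ((Real.sqrt m + 1) * ∑ t ∈ Finset.Icc 1 T, ‖E t‖) := by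
      rw [Finset.mul_sum, Finset.mul_sum]
    rw [h2] at h1
    linarith
  -- divide
  have hTη : (0 : ℝ) < (T : ℝ) * η := mul_pos hTpos hη
  calc (1 / (T : ℝ)) * ∑ t ∈ Finset.Icc 1 T, ‖f' (W t)‖
      = (η * ∑ t ∈ Finset.Icc 1 T, ‖f' (W t)‖) / ((T : ℝ) * η) := by
        field_simp
    _ ≤ ((f (W 1) - fstar) + η * ((Real.sqrt m + 1) * ∑ t ∈ Finset.Icc 1 T, ‖E t‖)
          + T * (LF * η ^ 2 * m / 2)) / ((T : ℝ) * η) := by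
        exact div_le_div_of_nonneg_right hsum hTη.le |>.trans_eq rfl
    _ = (f (W 1) - fstar) / (T * η)
        + (Real.sqrt m + 1) * ((1 / (T : ℝ)) * ∑ t ∈ Finset.Icc 1 T, ‖E t‖)
        + LF * η * m / 2 := by
        field_simp
end

section
/- Let f : ℝ^{m×n} → ℝ be differentiable with gradient satisfying ‖∇f(W) − ∇f(W')‖_{1,2} ≤ L·‖W − W'‖_{∞,2}, and bounded below by f*. Consider iterates W_{t+1} = W_t − η D_t for t = 1,…,T with η > 0, where each D_t satisfies ‖D_t‖_{∞,2} = 1 and ⟨∇f(W_t), D_t⟩ ≥ ‖∇f(W_t)‖_{1,2} − 2‖E_t‖_{1,2} for some matrices E_t. Then (1/T) Σ_{t=1}^T ‖∇f(W_t)‖_{1,2} ≤ (f(W_1) − f*)/(Tη) + 2·(1/T)Σ_{t=1}^T ‖E_t‖_{1,2} + L η / 2. -/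
open Finset

noncomputable def rowNorm {m n : ℕ} (x : EuclideanSpace ℝ (Fin m × Fin n)) (i : Fin m) : ℝ :=
  Real.sqrt (∑ j, (x (i, j)) ^ 2)

noncomputable def norm12 {m n : ℕ} (x : EuclideanSpace ℝ (Fin m × Fin n)) : ℝ :=
  ∑ i, rowNorm x i

noncomputable def normInf2 {m n : ℕ} (x : EuclideanSpace ℝ (Fin m × Fin n)) : ℝ :=
  ⨆ i, rowNorm x i

section Aux

open intervalIntegral

variable {m n : ℕ}

noncomputable def rowVec (x : EuclideanSpace ℝ (Fin m × Fin n)) (i : Fin m) :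
    EuclideanSpace ℝ (Fin n) :=
  (WithLp.equiv 2 (Fin n → ℝ)).symm (fun j => x (i, j))

lemma rowNorm_nonneg (x : EuclideanSpace ℝ (Fin m × Fin n)) (i : Fin m) : 0 ≤ rowNorm x i :=
  Real.sqrt_nonneg _

lemma rowNorm_eq_norm (x : EuclideanSpace ℝ (Fin m × Fin n)) (i : Fin m) :
    rowNorm x i = ‖rowVec x i‖ := by
  rw [EuclideanSpace.norm_eq, rowNorm]
  congr 1; apply Finset.sum_congr rfl; intro j _
  rw [Real.norm_eq_abs, sq_abs]; rfl

lemma rowNorm_le_normInf2 (x : EuclideanSpace ℝ (Fin m × Fin n)) (i : Fin m) :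
    rowNorm x i ≤ normInf2 x :=
  le_ciSup (Set.Finite.bddAbove (Set.finite_range _)) i

lemma normInf2_nonneg (x : EuclideanSpace ℝ (Fin m × Fin n)) : 0 ≤ normInf2 x := by
  rcases isEmpty_or_nonempty (Fin m) with h | h
  · simp [normInf2, Real.iSup_of_isEmpty]
  · exact le_trans (rowNorm_nonneg x h.some) (rowNorm_le_normInf2 x h.some)

lemma norm12_nonneg (x : EuclideanSpace ℝ (Fin m × Fin n)) : 0 ≤ norm12 x :=
  Finset.sum_nonneg fun i _ => rowNorm_nonneg x i

lemma inner_le_mixed (x y : EuclideanSpace ℝ (Fin m × Fin n)) :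
    (inner ℝ x y : ℝ) ≤ norm12 x * normInf2 y := by
  rw [PiLp.inner_apply]
  calc ∑ p : Fin m × Fin n, inner ℝ (x p) (y p)
      = ∑ i : Fin m, ∑ j : Fin n, x (i, j) * y (i, j) := by
        rw [Fintype.sum_prod_type]; simp [RCLike.inner_apply, mul_comm]
    _ ≤ ∑ i : Fin m, rowNorm x i * rowNorm y i := by
        apply Finset.sum_le_sum; intro i _
        have h := real_inner_le_norm (rowVec x i) (rowVec y i)
        rw [PiLp.inner_apply] at h
        rw [rowNorm_eq_norm, rowNorm_eq_norm]
        simpa [rowVec, RCLike.inner_apply, mul_comm] using h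
    _ ≤ ∑ i : Fin m, rowNorm x i * normInf2 y := by
        apply Finset.sum_le_sum; intro i _
        exact mul_le_mul_of_nonneg_left (rowNorm_le_normInf2 y i) (rowNorm_nonneg x i)
    _ = norm12 x * normInf2 y := by rw [norm12, Finset.sum_mul]

lemma rowNorm_smul (c : ℝ) (x : EuclideanSpace ℝ (Fin m × Fin n)) (i : Fin m) :
    rowNorm (c • x) i = |c| * rowNorm x i := by
  have h : ∀ j : Fin n, ((c • x) (i, j))^2 = c^2 * (x (i,j))^2 := by
    intro j; simp [PiLp.smul_apply, mul_pow]
  simp only [rowNorm, h, ← Finset.mul_sum]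
  rw [Real.sqrt_mul (sq_nonneg c), Real.sqrt_sq_eq_abs]

lemma normInf2_smul (c : ℝ) (x : EuclideanSpace ℝ (Fin m × Fin n)) :
    normInf2 (c • x) = |c| * normInf2 x := by
  simp only [normInf2, rowNorm_smul]
  exact (Real.mul_iSup_of_nonneg (abs_nonneg c) _).symm

lemma sum_norm_sq (x : EuclideanSpace ℝ (Fin m × Fin n)) :
    ∑ p : Fin m × Fin n, ‖x p‖^2 = ∑ i : Fin m, (rowNorm x i)^2 := by
  rw [Fintype.sum_prod_type]
  apply Finset.sum_congr rfl; intro i _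
  rw [rowNorm, Real.sq_sqrt (Finset.sum_nonneg fun j _ => sq_nonneg _)]
  apply Finset.sum_congr rfl; intro j _; rw [Real.norm_eq_abs, sq_abs]

lemma norm_le_norm12 (x : EuclideanSpace ℝ (Fin m × Fin n)) : ‖x‖ ≤ norm12 x := by
  rw [EuclideanSpace.norm_eq, sum_norm_sq]
  have h : ∑ i : Fin m, (rowNorm x i)^2 ≤ (∑ i : Fin m, rowNorm x i)^2 :=
    Finset.sum_sq_le_sq_sum_of_nonneg (fun i _ => rowNorm_nonneg x i)
  calc Real.sqrt (∑ i : Fin m, (rowNorm x i)^2) ≤ Real.sqrt ((∑ i : Fin m, rowNorm x i)^2) :=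
        Real.sqrt_le_sqrt h
    _ = norm12 x := by
        rw [norm12]; exact Real.sqrt_sq (Finset.sum_nonneg fun i _ => rowNorm_nonneg x i)

lemma normInf2_le_norm (x : EuclideanSpace ℝ (Fin m × Fin n)) : normInf2 x ≤ ‖x‖ := by
  rcases isEmpty_or_nonempty (Fin m) with h | h
  · rw [normInf2, Real.iSup_of_isEmpty]; exact norm_nonneg x
  · apply ciSup_le; intro i
    rw [EuclideanSpace.norm_eq, sum_norm_sq, rowNorm]
    apply Real.sqrt_le_sqrt
    have : (rowNorm x i)^2 = ∑ j, (x (i,j))^2 := by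
      rw [rowNorm, Real.sq_sqrt (Finset.sum_nonneg fun j _ => sq_nonneg _)]
    rw [← this]
    exact Finset.single_le_sum (f := fun i => (rowNorm x i)^2)
      (fun i _ => sq_nonneg _) (Finset.mem_univ i)

lemma descent_mixed (f : EuclideanSpace ℝ (Fin m × Fin n) → ℝ)
    (f' : EuclideanSpace ℝ (Fin m × Fin n) → EuclideanSpace ℝ (Fin m × Fin n))
    (hf : ∀ x, HasGradientAt f (f' x) x)
    (L : ℝ) (hL : 0 ≤ L)
    (hLip : ∀ W W', norm12 (f' W - f' W') ≤ L * normInf2 (W - W'))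
    (x v : EuclideanSpace ℝ (Fin m × Fin n)) :
    f (x + v) ≤ f x + inner ℝ (f' x) v + L / 2 * normInf2 v ^ 2 := by
  set c : ℝ → EuclideanSpace ℝ (Fin m × Fin n) := fun s => x + s • v with hc
  have hcont : Continuous f' := by
    apply LipschitzWith.continuous (K := L.toNNReal)
    apply LipschitzWith.of_dist_le_mul
    intro a b
    rw [dist_eq_norm, dist_eq_norm]
    calc ‖f' a - f' b‖ ≤ norm12 (f' a - f' b) := norm_le_norm12 _
      _ ≤ L * normInf2 (a - b) := hLip a b
      _ ≤ L * ‖a - b‖ := mul_le_mul_of_nonneg_left (normInf2_le_norm _) hL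
      _ = L.toNNReal * ‖a - b‖ := by rw [Real.coe_toNNReal L hL]
  have hderiv : ∀ s : ℝ, HasDerivAt (fun s => f (c s)) (inner ℝ (f' (c s)) v : ℝ) s := by
    intro s
    have hc' : HasDerivAt c v s := by
      simpa [hc] using ((hasDerivAt_id s).smul_const v).const_add x
    have := (hf (c s)).hasFDerivAt.comp_hasDerivAt s hc'
    simp [InnerProductSpace.toDual_apply_apply] at this
    exact this
  have hcontI : Continuous (fun s : ℝ => (inner ℝ (f' (c s)) v : ℝ)) := by
    exact (hcont.comp (by continuity)).inner continuous_const
  have hFTC : f (x + v) - f x = ∫ s in (0:ℝ)..1, (inner ℝ (f' (c s)) v : ℝ) := by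
    rw [intervalIntegral.integral_eq_sub_of_hasDerivAt
      (fun s _ => hderiv s) (hcontI.intervalIntegrable 0 1)]
    simp [hc]
  have hbound : ∀ s ∈ Set.Icc (0:ℝ) 1,
      (inner ℝ (f' (c s)) v : ℝ) ≤ inner ℝ (f' x) v + L * s * normInf2 v ^ 2 := by
    intro s hs
    have h1 : (inner ℝ (f' (c s)) v : ℝ) - inner ℝ (f' x) v = inner ℝ (f' (c s) - f' x) v := by
      rw [inner_sub_left]
    have h2 : (inner ℝ (f' (c s) - f' x) v : ℝ) ≤ L * s * normInf2 v ^ 2 := by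
      calc (inner ℝ (f' (c s) - f' x) v : ℝ) ≤ norm12 (f' (c s) - f' x) * normInf2 v :=
            inner_le_mixed _ _
        _ ≤ L * normInf2 (c s - x) * normInf2 v :=
            mul_le_mul_of_nonneg_right (hLip _ _) (normInf2_nonneg v)
        _ = L * s * normInf2 v ^ 2 := by
            have : c s - x = s • v := by simp [hc]
            rw [this, normInf2_smul, abs_of_nonneg hs.1]; ring
    linarith [h1, h2]
  have hInt : (∫ s in (0:ℝ)..1, (inner ℝ (f' (c s)) v : ℝ)) ≤
      ∫ s in (0:ℝ)..1, (inner ℝ (f' x) v + L * s * normInf2 v ^ 2 : ℝ) := by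
    apply intervalIntegral.integral_mono_on (by norm_num)
      (hcontI.intervalIntegrable 0 1)
      ((continuous_const.add ((continuous_const.mul continuous_id').mul
        continuous_const)).intervalIntegrable 0 1)
    exact hbound
  have hval : (∫ s in (0:ℝ)..1, (inner ℝ (f' x) v + L * s * normInf2 v ^ 2 : ℝ))
      = inner ℝ (f' x) v + L / 2 * normInf2 v ^ 2 := by
    rw [intervalIntegral.integral_add (f := fun _ : ℝ => (inner ℝ (f' x) v : ℝ))
      (g := fun s : ℝ => L * s * normInf2 v ^ 2) intervalIntegrable_const
      ((((continuous_const.mul continuous_id').mul continuous_const).intervalIntegrable 0 1))]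
    rw [intervalIntegral.integral_const]
    rw [show (fun s : ℝ => L * s * normInf2 v ^ 2) = fun s : ℝ => (L * normInf2 v ^ 2) * s
      from funext fun s => by ring]
    rw [intervalIntegral.integral_const_mul, integral_id]
    norm_num; ring
  linarith [hFTC, hInt, hval.le, hval.ge]

end Aux

theorem rmnp_convergence_core_mixed {m n : ℕ}
    (f : EuclideanSpace ℝ (Fin m × Fin n) → ℝ)
    (f' : EuclideanSpace ℝ (Fin m × Fin n) → EuclideanSpace ℝ (Fin m × Fin n))
    (hf : ∀ x, HasGradientAt f (f' x) x)
    (L : ℝ)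
    (hLip : ∀ W W', norm12 (f' W - f' W') ≤ L * normInf2 (W - W'))
    (fstar : ℝ) (hbdd : ∀ x, fstar ≤ f x)
    (T : ℕ) (hT : 1 ≤ T) (η : ℝ) (hη : 0 < η)
    (W D E : ℕ → EuclideanSpace ℝ (Fin m × Fin n))
    (hstep : ∀ t ∈ Finset.Icc 1 T, W (t + 1) = W t - η • D t)
    (hD : ∀ t ∈ Finset.Icc 1 T, normInf2 (D t) = 1)
    (hinner : ∀ t ∈ Finset.Icc 1 T,
      (inner ℝ (f' (W t)) (D t) : ℝ) ≥ norm12 (f' (W t)) - 2 * norm12 (E t)) :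
    (1 / (T : ℝ)) * ∑ t ∈ Finset.Icc 1 T, norm12 (f' (W t)) ≤
      (f (W 1) - fstar) / (T * η)
        + 2 * ((1 / (T : ℝ)) * ∑ t ∈ Finset.Icc 1 T, norm12 (E t))
        + L * η / 2 := by
  have h1T : 1 ∈ Finset.Icc 1 T := by simp [hT]
  -- L is nonnegative
  have hL : 0 ≤ L := by
    have h := hLip (W 1) (W 1 - D 1)
    have hsub : W 1 - (W 1 - D 1) = D 1 := by abel
    rw [hsub, hD 1 h1T, mul_one] at h
    exact le_trans (norm12_nonneg _) h
  -- per-step inequality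
  have key : ∀ t ∈ Finset.Icc 1 T, η * norm12 (f' (W t)) ≤
      f (W t) - f (W (t+1)) + 2 * η * norm12 (E t) + L * η ^ 2 / 2 := by
    intro t ht
    have hdes := descent_mixed f f' hf L hL hLip (W t) ((-η) • D t)
    have hWt : W t + (-η) • D t = W (t + 1) := by
      rw [hstep t ht]; rw [neg_smul]; abel
    rw [hWt] at hdes
    have hsm : (inner ℝ (f' (W t)) ((-η) • D t) : ℝ) = -η * inner ℝ (f' (W t)) (D t) := by
      rw [real_inner_smul_right]
    have hns : normInf2 ((-η) • D t) = η := by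
      rw [normInf2_smul, hD t ht, abs_neg, abs_of_pos hη, mul_one]
    rw [hsm, hns] at hdes
    have hin := hinner t ht
    nlinarith [hdes, hin, hη.le]
  -- sum up
  set S := ∑ t ∈ Finset.Icc 1 T, norm12 (f' (W t)) with hS
  set SE := ∑ t ∈ Finset.Icc 1 T, norm12 (E t) with hSE
  have htel : ∑ t ∈ Finset.Icc 1 T, (f (W t) - f (W (t+1)))
      = f (W 1) - f (W (T+1)) := by
    rw [← Finset.Ico_add_one_right_eq_Icc, Finset.sum_Ico_eq_sum_range]
    have : ∀ i ∈ Finset.range (T + 1 - 1),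
        f (W (1 + i)) - f (W (1 + i + 1)) =
        (fun i => f (W (1 + i))) i - (fun i => f (W (1 + i))) (i + 1) := by
      intro i _; simp [Nat.add_assoc]
    rw [Finset.sum_congr rfl this, Finset.sum_range_sub' (fun i => f (W (1 + i)))]
    simp [Nat.add_comm]
  have hsum : η * S ≤ (f (W 1) - f (W (T+1))) + 2 * η * SE + T * (L * η ^ 2 / 2) := by
    rw [hS, Finset.mul_sum]
    calc ∑ t ∈ Finset.Icc 1 T, η * norm12 (f' (W t))
        ≤ ∑ t ∈ Finset.Icc 1 T,
            (f (W t) - f (W (t+1)) + 2 * η * norm12 (E t) + L * η ^ 2 / 2) :=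
          Finset.sum_le_sum key
      _ = (f (W 1) - f (W (T+1))) + 2 * η * SE + T * (L * η ^ 2 / 2) := by
          rw [Finset.sum_add_distrib, Finset.sum_add_distrib, htel, ← Finset.mul_sum,
            Finset.sum_const, Nat.card_Icc]
          simp [hSE]
          try ring
  have hsum2 : η * S ≤ (f (W 1) - fstar) + 2 * η * SE + T * (L * η ^ 2 / 2) := by
    have := hbdd (W (T+1))
    linarith
  have hTpos : (0:ℝ) < T := by
    have : (1:ℝ) ≤ T := by exact_mod_cast hT
    linarith
  have hTη : (0:ℝ) < T * η := mul_pos hTpos hη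
  calc (1 / (T : ℝ)) * S = (η * S) / (T * η) := by
        field_simp
    _ ≤ ((f (W 1) - fstar) + 2 * η * SE + T * (L * η ^ 2 / 2)) / (T * η) :=
        (div_le_div_iff_of_pos_right hTη).mpr hsum2
    _ = (f (W 1) - fstar) / (T * η) + 2 * ((1 / (T : ℝ)) * SE) + L * η / 2 := by
        field_simp
end
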